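/- arXiv:2509.02393 — 3 statements merged into one kernel-verified Lean document; each statement's English description precedes it below -/
import Mathlib

section
/- Let Σ be a finite alphabet, Σ₁ ⊆ Σ, x, y ∈ Σ*, and a ∈ Σ. Then ((xa) + Σ₁)^≤ ⋆ ((ay) + Σ₁)^≤ = ((xay) + Σ₁)^≤, where for a word w, w + Σ₁ is the preimage of w under −Σ₁, L^≤ is the set of prefix-minimal elements of a language L, and X ⋆ Y is the elementwise fusion concatenation of sets of words (each element of X ends in a and each element of Y starts with a). -/
open scoped ENNReal

namespace PA

variable {α : Type*}

/-- Block contraction auxiliary: `prev` records whether the previous letter was in `K`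
(i.e., we are inside a `K`-block whose first letter was already kept). -/
def contractAux [DecidableEq α] (K : Finset α) : Bool → List α → List α
  | _, [] => []
  | prev, a :: x =>
    if a ∈ K then
      (if prev then contractAux K true x else a :: contractAux K true x)
    else a :: contractAux K false x

/-- `contract K x` is `x − K`: every maximal nonempty factor of `x` consisting of
letters of `K` is replaced by its first letter. -/
def contract [DecidableEq α] (K : Finset α) (x : List α) : List α :=
  contractAux K false x

/-- `preim K x` is `x + K`, the preimage of `x` under `contract K`. -/
def preim [DecidableEq α] (K : Finset α) (x : List α) : Set (List α) :=
  {x' | contract K x' = x}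

/-- `minPref L` is `L^≤`: the prefix-minimal elements of `L`. -/
def minPref (L : Set (List α)) : Set (List α) :=
  {x ∈ L | ∀ x', x' <+: x → x' ≠ x → x' ∉ L}

/-- Fusion concatenation: for `u` ending in `a` and `v` starting with `a`,
`fuse u v` is `u ++ v` with one copy of the shared letter removed. -/
def fuse (u v : List α) : List α := u ++ v.tail

/-- Elementwise fusion of sets of words. -/
def setFuse (X Y : Set (List α)) : Set (List α) :=
  {z | ∃ u ∈ X, ∃ v ∈ Y, z = fuse u v}

/-- Probability mass of a set of words: sum of `P` over the prefix-minimal elements. -/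
noncomputable def setP (P : List α → ℝ≥0∞) (R : Set (List α)) : ℝ≥0∞ :=
  ∑' x : minPref R, P x.1

/-- `P ∈ 𝒯(S)`: substochastic transition probability function on `S⁺`. -/
def IsTPF [Fintype α] (P : List α → ℝ≥0∞) : Prop :=
  (∀ x, P x ≤ 1) ∧ (∀ s : α, P [s] = 1) ∧
  (∀ s : α, (∑ t : α, P [s, t]) ≤ 1) ∧
  (∀ (x y : List α) (s : α), P (x ++ s :: y) = P (x ++ [s]) * P (s :: y))

/-- `(K)₀^M`: the interior of `K` in the DTMC `(P, a)`: states of `K` other than `a`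
with no incoming transition from outside `K`. -/
def interior [Fintype α] [DecidableEq α] (P : List α → ℝ≥0∞) (a : α) (K : Finset α) :
    Set α :=
  {s | s ∈ K ∧ s ≠ a ∧ (∑ t ∈ Kᶜ, P [t, s]) = 0}

open Classical in
noncomputable def abstr [Fintype α] [DecidableEq α]
    (P : List α → ℝ≥0∞) (a : α) (K : Finset α) : List α → ℝ≥0∞ :=
  fun x =>
    if x.length = 1 then 1
    else if 2 ≤ x.length ∧ ∃ s ∈ x, s ∈ interior P a K then 0
    else setP P (preim K x)

open Classical in
noncomputable def OutSet [Fintype α] (P : List α → ℝ≥0∞) (S₁ : Finset α) : Finset α :=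
  Finset.univ.filter fun t => t ∉ S₁ ∧ 0 < ∑ s ∈ S₁, P [s, t]

open Classical in
noncomputable def USet [Fintype α] (P : List α → ℝ≥0∞) (S₁ : Finset α) : Finset α :=
  Finset.univ.filter fun r => r ∈ S₁ ∧
    0 < setP P {x | ∃ (w : List α) (t : α),
      x = r :: (w ++ [t]) ∧ (∀ c ∈ w, c ∈ S₁) ∧ t ∈ OutSet P S₁}

open Classical in
noncomputable def U1Set [Fintype α] (P : List α → ℝ≥0∞) (S₁ : Finset α) : Finset α :=
  Finset.univ.filter fun r => r ∈ S₁ ∧ 0 < ∑ t ∈ OutSet P S₁, P [r, t]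

end PA

/-! The contraction `− K` is monotone for the prefix order and appending one letter extends the
contraction by at most that letter. Hence, for `z ≠ []`, a word is prefix-minimal in `z + K`
exactly when deleting its last letter changes its contraction; in particular the minimal words
of `xa + K` end in `a`. Since the contraction's state after reading a word ending in `a` depends
only on `a`, contraction commutes with fusion at `a`, and comparing the contractions of the
`dropLast`s gives `⊆`. For `⊇`, cut a minimal word of `xay + K` after its shortest prefix whose
contraction is `xa`. -/

namespace PA

variable {α : Type*}

theorem exists_mem_minPref_isPrefix {L : Set (List α)} {x : List α} (hx : x ∈ L) :
    ∃ x' ∈ minPref L, x' <+: x := by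
  induction hn : x.length using Nat.strong_induction_on generalizing x with
  | _ n ih =>
    by_cases hmin : x ∈ minPref L
    · exact ⟨x, hmin, List.prefix_rfl⟩
    obtain ⟨x', hx'x, hne, hx'⟩ : ∃ x', x' <+: x ∧ x' ≠ x ∧ x' ∈ L := by
      simpa [minPref, hx] using hmin
    have hlt : x'.length < n :=
      hn ▸ lt_of_le_of_ne hx'x.length_le fun h => hne (hx'x.eq_of_length h)
    obtain ⟨x'', hmin'', hx''x'⟩ := ih _ hlt hx' rfl
    exact ⟨x'', hmin'', hx''x'.trans hx'x⟩

theorem mem_minPref_preimage_iff {β : Type*} {f : List α → List β}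
    (hf : ∀ {u w}, u <+: w → f u <+: f w) {z : List β} (hz : f [] ≠ z) {w : List α} :
    w ∈ minPref (f ⁻¹' {z}) ↔ f w = z ∧ f w.dropLast ≠ z := by
  constructor
  · rintro ⟨hw, hmin⟩
    refine ⟨hw, hmin _ w.dropLast_prefix fun h => ?_⟩
    rcases List.eq_nil_or_concat' w with rfl | ⟨l, b, rfl⟩
    · exact hz hw
    · simp at h
  · rintro ⟨hw, hdrop⟩
    refine ⟨hw, fun u hu hne hfu => hdrop ?_⟩
    rcases List.eq_nil_or_concat' w with rfl | ⟨l, b, rfl⟩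
    · exact absurd (List.prefix_nil.1 hu) hne
    rw [List.dropLast_concat]
    have hul : u <+: l := (List.prefix_concat_iff.1 hu).resolve_left hne
    have hfl : f l <+: z := hw ▸ hf (List.prefix_append l [b])
    have hzl : z <+: f l := hfu ▸ hf hul
    exact hfl.eq_of_length (hfl.length_le.antisymm hzl.length_le)

variable [DecidableEq α] (K : Finset α)

/-- The `prev` flag of `contractAux K p` after reading a word. -/
def contractFlag : Bool → List α → Bool
  | p, [] => p
  | _, a :: x => contractFlag (decide (a ∈ K)) x

theorem contractFlag_concat (l : List α) (p : Bool) (b : α) :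
    contractFlag K p (l ++ [b]) = decide (b ∈ K) := by
  induction l generalizing p with
  | nil => rfl
  | cons a l ih => exact ih _

theorem contractAux_append (l m : List α) (p : Bool) :
    contractAux K p (l ++ m) = contractAux K p l ++ contractAux K (contractFlag K p l) m := by
  induction l generalizing p with
  | nil => rfl
  | cons a l ih => by_cases h : a ∈ K <;> cases p <;> simp [contractAux, contractFlag, h, ih]

theorem contract_append (l m : List α) :
    contract K (l ++ m) = contract K l ++ contractAux K (contractFlag K false l) m :=
  contractAux_append K l m false

theorem contract_concat (l : List α) (b : α) :
    contract K (l ++ [b]) =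
      contract K l ++ if b ∈ K ∧ contractFlag K false l = true then [] else [b] := by
  rw [contract_append]
  cases contractFlag K false l <;> by_cases h : b ∈ K <;> simp [contractAux, h]

theorem contract_cons (a : α) (v : List α) :
    contract K (a :: v) = a :: contractAux K (decide (a ∈ K)) v := by
  by_cases h : a ∈ K <;> simp [contract, contractAux, h]

/-- Together with `contract_cons`, this says `(la ⋆ av) − K = (la − K) ⋆ (av − K)`. -/
theorem contract_append_singleton_append (l v : List α) (a : α) :
    contract K (l ++ [a] ++ v) = contract K (l ++ [a]) ++ contractAux K (decide (a ∈ K)) v := by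
  rw [contract_append, contractFlag_concat]

theorem contract_isPrefix_contract {u w : List α} (h : u <+: w) :
    contract K u <+: contract K w := by
  obtain ⟨t, rfl⟩ := h
  exact ⟨_, (contract_append K u t).symm⟩

theorem exists_isPrefix_contract_eq {s w : List α} (hs : s <+: contract K w) :
    ∃ w', w' <+: w ∧ contract K w' = s := by
  induction w using List.reverseRecOn generalizing s with
  | nil => exact ⟨[], List.prefix_rfl, (List.prefix_nil.1 hs).symm⟩
  | append_singleton l b ih =>
    have of_prefix_l : s <+: contract K l → ∃ w', w' <+: l ++ [b] ∧ contract K w' = s :=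
      fun hs => let ⟨w', hw', h⟩ := ih hs; ⟨w', hw'.trans (List.prefix_append l [b]), h⟩
    rw [contract_concat] at hs
    split_ifs at hs with hb
    · exact of_prefix_l (by simpa using hs)
    · rcases List.prefix_concat_iff.1 hs with rfl | hs
      · exact ⟨l ++ [b], List.prefix_rfl, by rw [contract_concat, if_neg hb]⟩
      · exact of_prefix_l hs

theorem mem_minPref_preim_iff {z : List α} (hz : z ≠ []) {w : List α} :
    w ∈ minPref (preim K z) ↔ contract K w = z ∧ contract K w.dropLast ≠ z :=
  mem_minPref_preimage_iff (contract_isPrefix_contract K) hz.symm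

theorem eq_concat_of_mem_minPref_preim {u x : List α} {a : α}
    (hu : u ∈ minPref (preim K (x ++ [a]))) : ∃ l, u = l ++ [a] := by
  obtain ⟨hu, hu_min⟩ := (mem_minPref_preim_iff K (by simp)).1 hu
  rcases List.eq_nil_or_concat' u with rfl | ⟨l, b, rfl⟩
  · simp [contract, contractAux] at hu
  rw [List.dropLast_concat] at hu_min
  rw [contract_concat] at hu
  split_ifs at hu
  · exact absurd (by simpa using hu) hu_min
  · exact ⟨l, by simpa using (List.append_inj' hu rfl).2⟩

theorem fuse_mem_minPref_preim {u v x y : List α} {a : α}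
    (hu : u ∈ minPref (preim K (x ++ [a]))) (hv : v ∈ minPref (preim K (a :: y))) :
    fuse u v ∈ minPref (preim K (x ++ [a] ++ y)) := by
  obtain ⟨l, rfl⟩ := eq_concat_of_mem_minPref_preim K hu
  obtain ⟨hu, hu_min⟩ := (mem_minPref_preim_iff K (by simp)).1 hu
  obtain ⟨hv, hv_min⟩ := (mem_minPref_preim_iff K (by simp)).1 hv
  obtain _ | ⟨b, v⟩ := v
  · simp [contract, contractAux] at hv
  rw [contract_cons, List.cons.injEq] at hv
  obtain ⟨hb, rfl⟩ := hv
  subst b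
  show l ++ [a] ++ v ∈ _
  refine (mem_minPref_preim_iff K (by simp)).2 ⟨by rw [contract_append_singleton_append, hu], ?_⟩
  rcases List.eq_nil_or_concat' v with rfl | ⟨m, c, rfl⟩
  · simpa [contractAux] using hu_min
  rw [← List.append_assoc, List.dropLast_concat, contract_append_singleton_append, hu]
  intro h
  apply hv_min
  rw [← List.cons_append, List.dropLast_concat, contract_cons, List.append_cancel_left h]

theorem exists_fuse_eq_of_mem_minPref_preim {w x y : List α} {a : α}
    (hw : w ∈ minPref (preim K (x ++ [a] ++ y))) :
    ∃ u ∈ minPref (preim K (x ++ [a])), ∃ v ∈ minPref (preim K (a :: y)), w = fuse u v := by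
  obtain ⟨hw, hw_min⟩ := (mem_minPref_preim_iff K (by simp)).1 hw
  obtain ⟨w₁, hw₁w, hw₁⟩ :=
    exists_isPrefix_contract_eq K (hw ▸ List.prefix_append _ _ : x ++ [a] <+: contract K w)
  obtain ⟨u, hu, hu₁⟩ := exists_mem_minPref_isPrefix (L := preim K (x ++ [a])) hw₁
  obtain ⟨v, rfl⟩ := hu₁.trans hw₁w
  obtain ⟨l, rfl⟩ := eq_concat_of_mem_minPref_preim K hu
  have hl : contract K (l ++ [a]) = x ++ [a] := hu.1
  have hv : contractAux K (decide (a ∈ K)) v = y := by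
    rw [contract_append_singleton_append, hl] at hw
    exact List.append_cancel_left hw
  refine ⟨l ++ [a], hu, a :: v, (mem_minPref_preim_iff K (by simp)).2
    ⟨by rw [contract_cons, hv], ?_⟩, rfl⟩
  rcases List.eq_nil_or_concat' v with rfl | ⟨m, c, rfl⟩
  · simp [contract, contractAux]
  rw [← List.cons_append, List.dropLast_concat, contract_cons]
  intro h
  apply hw_min
  rw [← List.append_assoc, List.dropLast_concat, contract_append_singleton_append, hl,
    (List.cons.inj h).2]

end PA

theorem minPref_preim_fuse_general {α : Type*} [DecidableEq α]
    (K : Finset α) (x y : List α) (a : α) :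
    PA.setFuse (PA.minPref (PA.preim K (x ++ [a]))) (PA.minPref (PA.preim K (a :: y)))
      = PA.minPref (PA.preim K (x ++ [a] ++ y)) := by
  ext w
  constructor
  · rintro ⟨u, hu, v, hv, rfl⟩
    exact PA.fuse_mem_minPref_preim K hu hv
  · exact PA.exists_fuse_eq_of_mem_minPref_preim K

/-- `((xa)+K)^≤ ⋆ ((ay)+K)^≤ = ((xay)+K)^≤`. -/
theorem minPref_preim_fuse {α : Type*} [DecidableEq α] [Fintype α]
    (K : Finset α) (x y : List α) (a : α) :
    PA.setFuse (PA.minPref (PA.preim K (x ++ [a]))) (PA.minPref (PA.preim K (a :: y)))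
      = PA.minPref (PA.preim K (x ++ [a] ++ y)) :=
  minPref_preim_fuse_general K x y a
end

section
/- Let Σ be a finite alphabet and Σ₁ ⊆ Σ₂ ⊆ Σ. Then for every word x ∈ Σ*, the set (x + Σ₂)^≤ equals the disjoint union, over all y ∈ (x + Σ₂)^≤ satisfying y − Σ₁ = y, of the sets (y + Σ₁)^≤. Moreover this union is indeed disjoint. -/
open scoped ENNReal

/-!
Since `K₁ ⊆ K₂`, contracting by `K₂` factors through contracting by `K₁`, so
`x + K₂` is the preimage of itself under `− K₁`. Contraction maps prefixes onto the
prefixes of the contracted word, and for such a map a word is prefix-minimal in the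
preimage of `L` iff its image is prefix-minimal in `L` and the word is prefix-minimal in
its own fibre. The fibres `y + K₁` are pairwise disjoint, and `y − K₁ = y` says exactly
that `y` lies in the image of `− K₁`.
-/

namespace PA

section Contract

variable {α : Type*} [DecidableEq α]

theorem contractAux_cons (K : Finset α) (b : Bool) (a : α) (x : List α) :
    contractAux K b (a :: x) =
      (if b ∧ a ∈ K then [] else [a]) ++ contractAux K (decide (a ∈ K)) x := by
  cases b <;> by_cases ha : a ∈ K <;> simp [contractAux, ha]

theorem contractAux_prefix_contractAux_append (K : Finset α) (b : Bool) (u v : List α) :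
    contractAux K b u <+: contractAux K b (u ++ v) := by
  induction u generalizing b with
  | nil => simp [contractAux]
  | cons a u ih =>
    rw [List.cons_append, contractAux_cons, contractAux_cons]
    exact (List.prefix_append_right_inj _).mpr (ih _)

theorem contract_prefix_contract (K : Finset α) {u w : List α} (huw : u <+: w) :
    contract K u <+: contract K w := by
  obtain ⟨v, rfl⟩ := huw
  exact contractAux_prefix_contractAux_append K false u v

theorem exists_prefix_contractAux_eq (K : Finset α) (b : Bool) {w p : List α}
    (hp : p <+: contractAux K b w) : ∃ u, u <+: w ∧ contractAux K b u = p := by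
  induction w generalizing b p with
  | nil => exact ⟨[], List.nil_prefix, (List.prefix_nil.mp hp).symm⟩
  | cons a w ih =>
    rcases p with _ | ⟨c, p⟩
    · exact ⟨[], List.nil_prefix, rfl⟩
    rw [contractAux_cons] at hp
    split_ifs at hp with hab
    · obtain ⟨u, hu, hup⟩ := ih _ hp
      exact ⟨a :: u, List.cons_prefix_cons.mpr ⟨rfl, hu⟩,
        by rw [contractAux_cons, if_pos hab, List.nil_append, hup]⟩
    · obtain ⟨rfl, hp⟩ := List.cons_prefix_cons.mp hp
      obtain ⟨u, hu, rfl⟩ := ih _ hp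
      exact ⟨c :: u, List.cons_prefix_cons.mpr ⟨rfl, hu⟩,
        by rw [contractAux_cons, if_neg hab, List.singleton_append]⟩

theorem exists_prefix_contract_eq (K : Finset α) {w p : List α} (hp : p <+: contract K w) :
    ∃ u, u <+: w ∧ contract K u = p :=
  exists_prefix_contractAux_eq K false hp

theorem contractAux_contractAux_of_subset {K₁ K₂ : Finset α} (h : K₁ ⊆ K₂) (w : List α)
    {b₁ b₂ : Bool} (hb : b₁ → b₂) :
    contractAux K₂ b₂ (contractAux K₁ b₁ w) = contractAux K₂ b₂ w := by
  induction w generalizing b₁ b₂ with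
  | nil => simp [contractAux]
  | cons a w ih =>
    rw [contractAux_cons K₁]
    split_ifs with hab
    · obtain ⟨hb₁, ha⟩ := hab
      obtain rfl := hb hb₁
      rw [List.nil_append, ih (fun _ => rfl), contractAux_cons, if_pos ⟨rfl, h ha⟩]
      simp [h ha]
    · rw [List.singleton_append, contractAux_cons, contractAux_cons,
        ih (fun ha => by simpa using h (by simpa using ha))]

theorem contract_contract_of_subset {K₁ K₂ : Finset α} (h : K₁ ⊆ K₂) (w : List α) :
    contract K₂ (contract K₁ w) = contract K₂ w :=
  contractAux_contractAux_of_subset h w (b₁ := false) (fun hf => hf)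

theorem contract_contract (K : Finset α) (w : List α) :
    contract K (contract K w) = contract K w :=
  contract_contract_of_subset subset_rfl w

theorem preimage_contract_preim {K₁ K₂ : Finset α} (h : K₁ ⊆ K₂) (x : List α) :
    contract K₁ ⁻¹' preim K₂ x = preim K₂ x := by
  ext w
  change contract K₂ (contract K₁ w) = x ↔ contract K₂ w = x
  rw [contract_contract_of_subset h]

end Contract

theorem mem_minPref_preimage_iff_s4 {β γ : Type*} {f : List β → List γ}
    (hmono : ∀ {u w}, u <+: w → f u <+: f w)
    (hlift : ∀ {w p}, p <+: f w → ∃ u, u <+: w ∧ f u = p) (L : Set (List γ)) (w : List β) :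
    w ∈ minPref (f ⁻¹' L) ↔ f w ∈ minPref L ∧ w ∈ minPref (f ⁻¹' {f w}) := by
  constructor
  · rintro ⟨hw, hmin⟩
    refine ⟨⟨hw, fun p hp hne hpL => ?_⟩, ⟨rfl, fun u hu hne hfu => hmin u hu hne ?_⟩⟩
    · obtain ⟨u, hu, rfl⟩ := hlift hp
      exact hmin u hu (fun h => hne (h ▸ rfl)) hpL
    · rwa [Set.mem_preimage, Set.mem_singleton_iff.mp hfu]
  · rintro ⟨⟨hw, hmin⟩, -, hminFiber⟩
    refine ⟨hw, fun u hu hne huL => ?_⟩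
    by_cases hfu : f u = f w
    · exact hminFiber u hu hne hfu
    · exact hmin (f u) (hmono hu) hfu huL

end PA

theorem minPref_preim_decomp_general {α : Type*} [DecidableEq α]
    (K₁ K₂ : Finset α) (h : K₁ ⊆ K₂) (x : List α) :
    (PA.minPref (PA.preim K₂ x) =
      ⋃ y ∈ {y ∈ PA.minPref (PA.preim K₂ x) | PA.contract K₁ y = y},
        PA.minPref (PA.preim K₁ y)) ∧
    (∀ y z, y ∈ PA.minPref (PA.preim K₂ x) → PA.contract K₁ y = y →
      z ∈ PA.minPref (PA.preim K₂ x) → PA.contract K₁ z = z → y ≠ z →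
      Disjoint (PA.minPref (PA.preim K₁ y)) (PA.minPref (PA.preim K₁ z))) := by
  have hpreim : ∀ y, PA.preim K₁ y = PA.contract K₁ ⁻¹' {y} := fun _ => rfl
  refine ⟨?_, fun y z _ _ _ _ hne => ?_⟩
  · ext w
    conv_lhs => rw [← PA.preimage_contract_preim h]
    rw [PA.mem_minPref_preimage_iff_s4 (PA.contract_prefix_contract K₁)
      (PA.exists_prefix_contract_eq K₁)]
    simp only [Set.mem_iUnion, Set.mem_sep_iff, exists_prop, hpreim]
    constructor
    · rintro ⟨hy, hw⟩
      exact ⟨_, ⟨hy, PA.contract_contract K₁ w⟩, hw⟩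
    · rintro ⟨y, ⟨hy, -⟩, hw⟩
      obtain rfl : PA.contract K₁ w = y := hw.1
      exact ⟨hy, hw⟩
  · refine Set.disjoint_left.mpr fun w hwy hwz => hne ?_
    exact hwy.1.symm.trans hwz.1

/-- `(x + K₂)^≤` is the disjoint union of the `(y + K₁)^≤` over the
`y ∈ (x + K₂)^≤` with `y − K₁ = y`. -/
theorem minPref_preim_decomp {α : Type*} [DecidableEq α] [Fintype α]
    (K₁ K₂ : Finset α) (h : K₁ ⊆ K₂) (x : List α) :
    (PA.minPref (PA.preim K₂ x) =
      ⋃ y ∈ {y ∈ PA.minPref (PA.preim K₂ x) | PA.contract K₁ y = y},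
        PA.minPref (PA.preim K₁ y)) ∧
    (∀ y z, y ∈ PA.minPref (PA.preim K₂ x) → PA.contract K₁ y = y →
      z ∈ PA.minPref (PA.preim K₂ x) → PA.contract K₁ z = z → y ≠ z →
      Disjoint (PA.minPref (PA.preim K₁ y)) (PA.minPref (PA.preim K₁ z))) :=
  minPref_preim_decomp_general K₁ K₂ h x
end

section
/- Let S be a finite set, P ∈ 𝒯(S) a substochastic transition probability function, s ∈ S, and R ⊆ sS* any (possibly infinite) set of words starting with s. Then P(R) := Σ_{x ∈ R^≤} P(x) ≤ 1. -/
open scoped ENNReal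

/-! Split a finite prefix-free set of words starting with `s` according to the second letter `t`:
by multiplicativity, the words beginning with `s t` carry `P(s t)` times the mass of their tails,
which again form a prefix-free set of words, now starting with `t`. Induction on the word length
bounds the total by `∑ₜ P(s t) ≤ 1`, and the infinite sum is the supremum of the finite ones. -/

namespace PA

variable {α : Type*}

lemma minPref_isAntichain (L : Set (List α)) : IsAntichain (· <+: ·) (minPref L) :=
  fun _ hx _ hy hxy hpre => hy.2 _ hpre hxy hx.1

lemma sum_eq_sum_sum_preimage_cons [Fintype α] {β : Type*} [AddCommMonoid β]
    (T : Finset (List α)) (hT : [] ∉ T) (f : List α → β) :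
    ∑ y ∈ T, f y =
      ∑ t, ∑ z ∈ T.preimage (List.cons t) List.cons_injective.injOn, f (t :: z) := by
  classical
  simp_rw [Finset.sum_preimage', Finset.sum_filter]
  rw [Finset.sum_comm]
  refine Finset.sum_congr rfl fun y hy => ?_
  obtain ⟨t, z, rfl⟩ := List.exists_cons_of_ne_nil (ne_of_mem_of_not_mem hy hT)
  simp

section

variable [Fintype α] {P : List α → ℝ≥0∞}

lemma IsTPF.apply_cons_cons (hP : IsTPF P) (s t : α) (z : List α) :
    P (s :: t :: z) = P [s, t] * P (t :: z) :=
  hP.2.2.2 [s] z t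

lemma IsTPF.sum_cons_le_one_of_length_lt (hP : IsTPF P) {n : ℕ} {s : α}
    {T : Finset (List α)} (hT : IsAntichain (· <+: ·) (T : Set (List α)))
    (hlen : ∀ y ∈ T, y.length < n) : ∑ y ∈ T, P (s :: y) ≤ 1 := by
  induction n generalizing s T with
  | zero =>
    rw [Finset.eq_empty_of_forall_notMem fun y hy => Nat.not_lt_zero _ (hlen y hy)]
    simp
  | succ n ih =>
    by_cases hnil : [] ∈ T
    · have hT_nil : T ⊆ {[]} := fun y hy =>
        Finset.mem_singleton.2 (hT.eq hnil hy List.nil_prefix).symm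
      calc ∑ y ∈ T, P (s :: y) ≤ ∑ y ∈ {[]}, P (s :: y) := Finset.sum_le_sum_of_subset hT_nil
        _ = 1 := by simp [hP.2.1]
    calc ∑ y ∈ T, P (s :: y)
        = ∑ t, P [s, t] *
            ∑ z ∈ T.preimage (List.cons t) List.cons_injective.injOn, P (t :: z) := by
          rw [sum_eq_sum_sum_preimage_cons T hnil]
          simp only [Finset.mul_sum, ← hP.apply_cons_cons]
      _ ≤ ∑ t, P [s, t] * 1 := by
          gcongr with t
          refine ih ?_ fun z hz => ?_
          · rw [Finset.coe_preimage]
            exact hT.preimage List.cons_injective fun _ _ h => List.cons_prefix_cons.2 ⟨rfl, h⟩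
          · simpa using hlen _ (Finset.mem_preimage.1 hz)
      _ ≤ 1 := by simpa only [mul_one] using hP.2.2.1 s

lemma IsTPF.sum_cons_le_one (hP : IsTPF P) (s : α) {T : Finset (List α)}
    (hT : IsAntichain (· <+: ·) (T : Set (List α))) : ∑ y ∈ T, P (s :: y) ≤ 1 :=
  hP.sum_cons_le_one_of_length_lt hT fun _ hy =>
    Nat.lt_succ_of_le (Finset.le_sup (f := List.length) hy)

lemma IsTPF.sum_le_one_of_isAntichain (hP : IsTPF P) (s : α) {F : Finset (List α)}
    (hF : IsAntichain (· <+: ·) (F : Set (List α))) (hs : ∀ x ∈ F, ∃ y, x = s :: y) :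
    ∑ x ∈ F, P x ≤ 1 := by
  classical
  have hcons : ∀ x ∈ F, s :: x.tail = x := fun x hx => by
    obtain ⟨y, rfl⟩ := hs x hx; rfl
  have htail_inj : Set.InjOn List.tail (F : Set (List α)) := fun x hx x' hx' h => by
    rw [← hcons x hx, ← hcons x' hx', h]
  have htail_antichain : IsAntichain (· <+: ·) (F.image List.tail : Set (List α)) := by
    rintro _ hy _ hy' hne hpre
    obtain ⟨x, hx, rfl⟩ := Finset.mem_image.1 hy
    obtain ⟨x', hx', rfl⟩ := Finset.mem_image.1 hy'
    refine hF hx hx' (ne_of_apply_ne _ hne) ?_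
    rw [← hcons x hx, ← hcons x' hx']
    exact List.cons_prefix_cons.2 ⟨rfl, hpre⟩
  calc ∑ x ∈ F, P x = ∑ y ∈ F.image List.tail, P (s :: y) := by
        rw [Finset.sum_image htail_inj]
        exact Finset.sum_congr rfl fun x hx => by rw [hcons x hx]
    _ ≤ 1 := hP.sum_cons_le_one s htail_antichain

end

end PA

open scoped ENNReal in
/-- for any set `R` of words all starting with `s`, `P(R) ≤ 1`. -/
theorem setP_le_one {α : Type*} [Fintype α]
    (P : List α → ℝ≥0∞) (hP : PA.IsTPF P) (s : α)
    (R : Set (List α)) (hR : ∀ x ∈ R, ∃ y : List α, x = s :: y) :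
    PA.setP P R ≤ 1 := by
  refine tsum_le_of_sum_le' zero_le_one fun G => ?_
  refine (Finset.sum_map G (Function.Embedding.subtype _) P).symm.trans_le ?_
  refine hP.sum_le_one_of_isAntichain s ((PA.minPref_isAntichain R).subset ?_) ?_
  · simp
  · simp only [Finset.mem_map, Function.Embedding.coe_subtype]
    rintro _ ⟨x, -, rfl⟩
    exact hR x x.2.1
end
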